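/- For every a ∈ ℝ and R > 0, the function F(μ) := a·( cos(μR)/(μR²) − sin(μR)/(μ²R³) ) + sin(μR)/R, defined for μ > 0, has infinitely many positive zeros; that is, there exists a strictly increasing sequence μ₁ < μ₂ < μ₃ < ⋯ of positive reals with μ_j → ∞ and F(μ_j) = 0 for all j. -/

import Mathlib

/-!
With `x = μR` the boundary function is `(a(cos x/x − sin x/x²) + sin x)/R`. At the zeros
`x = nπ` of `sin` only `a cos x/(xR)` survives, and `cos` changes sign from one such zero to the
next, so by the intermediate value theorem every interval `[nπ, (n+1)π]` contains a zero. Taking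
every other interval separates the zeros into a strictly increasing sequence.
-/

open Real Set Filter

theorem exists_mem_Icc_eq_zero_of_mul_nonpos {α : Type*} [ConditionallyCompleteLinearOrder α]
    [TopologicalSpace α] [OrderTopology α] [DenselyOrdered α] {f : α → ℝ} {l r : α}
    (hlr : l ≤ r) (hf : ContinuousOn f (Icc l r)) (h : f l * f r ≤ 0) :
    ∃ x ∈ Icc l r, f x = 0 := by
  rw [← uIcc_of_le hlr] at hf ⊢
  refine intermediate_value_uIcc hf (mem_uIcc.2 ?_)
  rcases mul_nonpos_iff.1 h with ⟨hl, hr⟩ | ⟨hl, hr⟩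
  · exact .inr ⟨hr, hl⟩
  · exact .inl ⟨hl, hr⟩

noncomputable def boundaryFun (a R μ : ℝ) : ℝ :=
  a * (cos (μ * R) / (μ * R ^ 2) - sin (μ * R) / (μ ^ 2 * R ^ 3)) + sin (μ * R) / R

section

variable {a R : ℝ}

theorem continuousOn_boundaryFun (hR : R ≠ 0) : ContinuousOn (boundaryFun a R) (Ioi 0) := by
  intro μ hμ
  have hμ : μ ≠ 0 := (mem_Ioi.1 hμ).ne'
  refine ContinuousAt.continuousWithinAt ?_
  unfold boundaryFun
  fun_prop (disch := simp [*])

theorem boundaryFun_of_sin_eq_zero {μ : ℝ} (hs : sin (μ * R) = 0) :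
    boundaryFun a R μ = a * cos (μ * R) / (μ * R ^ 2) := by
  simp only [boundaryFun, hs, zero_div, sub_zero, add_zero, mul_div_assoc]

theorem boundaryFun_mul_boundaryFun_add_pi_div_nonpos (hR : 0 < R) {μ : ℝ} (hμ : 0 < μ)
    (hs : sin (μ * R) = 0) : boundaryFun a R μ * boundaryFun a R (μ + π / R) ≤ 0 := by
  have hshift : (μ + π / R) * R = μ * R + π := by field_simp
  have hs' : sin ((μ + π / R) * R) = 0 := by rw [hshift, sin_add_pi, hs, neg_zero]
  rw [boundaryFun_of_sin_eq_zero hs, boundaryFun_of_sin_eq_zero hs', hshift, cos_add_pi,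
    mul_neg, neg_div, mul_neg, neg_nonpos, div_mul_div_comm]
  exact div_nonneg (mul_self_nonneg _) (by positivity)

theorem exists_boundaryFun_eq_zero (hR : 0 < R) {n : ℕ} (hn : 0 < n) :
    ∃ μ ∈ Icc (n * π / R) (n * π / R + π / R), boundaryFun a R μ = 0 := by
  have hpos : 0 < n * π / R := by positivity
  have hs : sin (n * π / R * R) = 0 := by rw [div_mul_cancel₀ _ hR.ne', sin_nat_mul_pi]
  refine exists_mem_Icc_eq_zero_of_mul_nonpos (by linarith [div_pos pi_pos hR]) ?_
    (boundaryFun_mul_boundaryFun_add_pi_div_nonpos hR hpos hs)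
  exact (continuousOn_boundaryFun hR.ne').mono fun μ hμ => hpos.trans_le hμ.1

end

theorem stmt17 (a R : ℝ) (hR : 0 < R) :
    ∃ μ : ℕ → ℝ, StrictMono μ ∧ (∀ j, 0 < μ j) ∧
      Tendsto μ atTop atTop ∧
      ∀ j, a * (Real.cos (μ j * R) / (μ j * R ^ 2) -
          Real.sin (μ j * R) / ((μ j) ^ 2 * R ^ 3)) +
        Real.sin (μ j * R) / R = 0 := by
  choose μ hmem hzero using fun j : ℕ =>
    exists_boundaryFun_eq_zero (a := a) hR (Nat.succ_pos (2 * j))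
  set l : ℕ → ℝ := fun j => ((2 * j + 1 : ℕ) : ℝ) * π / R
  have hodd : Tendsto (fun j : ℕ => 2 * j + 1) atTop atTop :=
    tendsto_atTop_mono (fun j => by rw [id_eq]; omega) tendsto_id
  have hl : Tendsto l atTop atTop :=
    ((tendsto_natCast_atTop_atTop.comp hodd).atTop_mul_const pi_pos).atTop_div_const hR
  have hgap : ∀ j, l j + π / R < l (j + 1) := fun j => by
    simp only [l]; push_cast; rw [← add_div]; gcongr; linarith [pi_pos]
  refine ⟨μ, strictMono_nat_of_lt_succ fun j => ?_, fun j => ?_,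
    tendsto_atTop_mono (fun j => (hmem j).1) hl, hzero⟩
  · exact ((hmem j).2.trans_lt (hgap j)).trans_le (hmem (j + 1)).1
  · exact lt_of_lt_of_le (by positivity) (hmem j).1
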